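/- For every i ∈ I and all λ, μ ∈ V, one has B(T_i λ, μ) = B(λ, T_i μ); that is, each operator T_i is self-adjoint with respect to the deformed bilinear form B. -/
import Mathlib


noncomputable section

open scoped BigOperators

/-- The field `K = ℚ(q,t)` of rational functions in two variables over `ℚ`. -/
abbrev KK : Type := FractionRing (MvPolynomial (Fin 2) ℚ)

/-- The variable `q` of `ℚ(q,t)`. -/
def qv : KK := algebraMap (MvPolynomial (Fin 2) ℚ) KK (MvPolynomial.X 0)

/-- The variable `t` of `ℚ(q,t)`. -/
def tv : KK := algebraMap (MvPolynomial (Fin 2) ℚ) KK (MvPolynomial.X 1)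

/-- The quantum integer `[k]_q = (q^k - q^{-k})/(q - q⁻¹)` in `ℚ(q,t)`. -/
def qint (k : ℤ) : KK := (qv ^ k - qv ^ (-k)) / (qv - qv⁻¹)

variable {I : Type}

/-- The `(q,t)`-deformed Cartan matrix `C(q,t)`:
`C_{ii} = q^{d_i} t⁻¹ + q^{-d_i} t` and `C_{ij} = [c_{ij}]_q` for `i ≠ j`. -/
def Cqt [DecidableEq I] (c : I → I → ℤ) (d : I → ℤ) (i j : I) : KK :=
  if i = j then qv ^ (d i) * tv⁻¹ + qv ^ (-(d i)) * tv else qint (c i j)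

/-- The basis vector `α_i` of `V = K^{⊕I}`. -/
def alphaK [DecidableEq I] (i : I) : I → KK := Pi.single i 1

/-- The deformed bilinear form `B` on `V`, determined by
`B(α_i, α_j) = [d_i]_q C_{ij}(q,t)`. -/
def Bform [Fintype I] [DecidableEq I] (c : I → I → ℤ) (d : I → ℤ)
    (lam mu : I → KK) : KK :=
  ∑ i, ∑ j, lam i * mu j * (qint (d i) * Cqt c d i j)

/-- The operator `T_i : V → V`, `T_i(λ) = λ - (q^{-d_i} t/[d_i]_q)·B(α_i, λ)·α_i`. -/
def Trefl [Fintype I] [DecidableEq I] (c : I → I → ℤ) (d : I → ℤ) (i : I)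
    (lam : I → KK) : I → KK :=
  fun k => lam k - (qv ^ (-(d i)) * tv / qint (d i)) * Bform c d (alphaK i) lam * alphaK i k

lemma qv_ne_zero : qv ≠ 0 := by
  intro h
  have h0 : (MvPolynomial.X 0 : MvPolynomial (Fin 2) ℚ) = 0 :=
    IsFractionRing.to_map_eq_zero_iff.mp h
  exact MvPolynomial.X_ne_zero _ h0

lemma qsub_ne : qv - qv⁻¹ ≠ 0 := by
  intro h
  have hq := qv_ne_zero
  have heq : qv = qv⁻¹ := sub_eq_zero.mp h
  have h2 : qv * qv = 1 := by
    calc qv * qv = qv * qv⁻¹ := by rw [← heq]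
    _ = 1 := mul_inv_cancel₀ hq
  have h3 : (MvPolynomial.X 0 * MvPolynomial.X 0 : MvPolynomial (Fin 2) ℚ) = 1 := by
    apply IsFractionRing.injective (MvPolynomial (Fin 2) ℚ) KK
    rw [map_mul, map_one]; exact h2
  have h4 := congrArg (MvPolynomial.eval (fun _ => (2 : ℚ))) h3
  simp [MvPolynomial.eval_X] at h4
  norm_num at h4

lemma qint_zero : qint 0 = 0 := by simp [qint]

lemma qint_neg (k : ℤ) : qint (-k) = - qint k := by
  rw [qint, qint, neg_neg, ← neg_sub, neg_div]

lemma qint_one : qint 1 = 1 := by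
  rw [qint, zpow_one]
  rw [show ((-1 : ℤ)) = -1 from rfl, zpow_neg_one]
  exact div_self qsub_ne

lemma key_sym {I : Type} [DecidableEq I] (c : I → I → ℤ) (d : I → ℤ) (r : ℤ)
    (hdpos : ∀ i, 0 < d i)
    (hsymm : ∀ i j, d i * c i j = d j * c j i)
    (honer : ∀ i, d i = 1 ∨ d i = r)
    (hbmax : ∀ i j, i ≠ j → c i j ≠ 0 → d i * c i j = -(max (d i) (d j)))
    (i j : I) :
    qint (d i) * Cqt c d i j = qint (d j) * Cqt c d j i := by
  by_cases hij : i = j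
  · subst hij; rfl
  have hji : j ≠ i := fun h => hij h.symm
  simp only [Cqt, if_neg hij, if_neg hji]
  by_cases hc : c i j = 0
  · have hcj : c j i = 0 := by
      have h := hsymm i j
      rw [hc, mul_zero] at h
      rcases mul_eq_zero.mp h.symm with h' | h'
      · exact absurd h' (hdpos j).ne'
      · exact h'
    rw [hc, hcj, qint_zero, mul_zero, mul_zero]
  have hcj : c j i ≠ 0 := by
    intro h
    have h2 := hsymm i j
    rw [h, mul_zero] at h2
    rcases mul_eq_zero.mp h2 with h' | h'
    · exact absurd h' (hdpos i).ne'
    · exact hc h'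
  rcases honer i with hi | hi <;> rcases honer j with hj | hj
  · have hcc : c i j = c j i := by
      have h := hsymm i j; rw [hi, hj, one_mul, one_mul] at h; exact h
    rw [hi, hj, hcc]
  · -- d i = 1, d j = r
    have hr1 : 1 ≤ r := by rw [← hj]; exact hdpos j
    have hmax : max (d i) (d j) = r := by rw [hi, hj]; exact max_eq_right hr1
    have hcij : c i j = -r := by
      have h := hbmax i j hij hc; rw [hmax, hi, one_mul] at h; exact h
    have hcji : c j i = -1 := by
      have h := hsymm i j
      rw [hi, one_mul, hcij, hj] at h
      have hr0 : r ≠ 0 := by omega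
      have h2 : r * c j i = r * (-1) := by linarith
      exact mul_left_cancel₀ hr0 h2
    rw [hi, hj, hcij, hcji, qint_one, qint_neg, qint_neg, qint_one]
    ring
  · -- d i = r, d j = 1
    have hr1 : 1 ≤ r := by rw [← hi]; exact hdpos i
    have hmax : max (d i) (d j) = r := by rw [hi, hj]; exact max_eq_left hr1
    have hcij : c i j = -1 := by
      have h := hbmax i j hij hc; rw [hmax, hi] at h
      have hr0 : r ≠ 0 := by omega
      have h2 : r * c i j = r * (-1) := by linarith
      exact mul_left_cancel₀ hr0 h2
    have hcji : c j i = -r := by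
      have h := hsymm i j
      rw [hi, hcij, hj, one_mul] at h
      linarith
    rw [hi, hj, hcij, hcji, qint_one, qint_neg, qint_neg, qint_one]
    ring
  · have hr0 : r ≠ 0 := by have := hdpos i; omega
    have hcc : c i j = c j i := by
      have h := hsymm i j; rw [hi, hj] at h
      exact mul_left_cancel₀ hr0 h
    rw [hi, hj, hcc]

lemma Bform_symm {I : Type} [Fintype I] [DecidableEq I]
    (c : I → I → ℤ) (d : I → ℤ) (r : ℤ)
    (hdpos : ∀ i, 0 < d i)
    (hsymm : ∀ i j, d i * c i j = d j * c j i)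
    (honer : ∀ i, d i = 1 ∨ d i = r)
    (hbmax : ∀ i j, i ≠ j → c i j ≠ 0 → d i * c i j = -(max (d i) (d j)))
    (lam mu : I → KK) :
    Bform c d lam mu = Bform c d mu lam := by
  unfold Bform
  rw [Finset.sum_comm]
  refine Finset.sum_congr rfl fun x _ => Finset.sum_congr rfl fun y _ => ?_
  rw [key_sym c d r hdpos hsymm honer hbmax x y]
  ring

lemma Bform_right {I : Type} [Fintype I] [DecidableEq I]
    (c : I → I → ℤ) (d : I → ℤ) (x y z : I → KK) (a : KK) :
    Bform c d x (fun k => y k - a * z k) = Bform c d x y - a * Bform c d x z := by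
  unfold Bform
  rw [Finset.mul_sum, ← Finset.sum_sub_distrib]
  refine Finset.sum_congr rfl fun i _ => ?_
  rw [Finset.mul_sum, ← Finset.sum_sub_distrib]
  refine Finset.sum_congr rfl fun j _ => ?_
  ring

theorem statement_0
    {I : Type} [Fintype I] [DecidableEq I] [Nonempty I]
    (c : I → I → ℤ) (d : I → ℤ) (r : ℤ)
    -- `C` is a symmetrizable generalized Cartan matrix
    (hdiag : ∀ i, c i i = 2)
    (hoff : ∀ i j, i ≠ j → c i j ≤ 0)
    -- `(d_i)` are positive integers with gcd 1 symmetrizing `C`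
    (hdpos : ∀ i, 0 < d i)
    (hgcd : Finset.univ.gcd d = 1)
    (hsymm : ∀ i j, d i * c i j = d j * c j i)
    -- each `d_i ∈ {1, r}` where `r = max_i d_i`
    (honer : ∀ i, d i = 1 ∨ d i = r)
    (hrmax : ∀ i, d i ≤ r)
    (hrmem : ∃ i, d i = r)
    -- `d_i c_{ij} = -max(d_i, d_j)` whenever `i ≠ j` and `c_{ij} ≠ 0`
    (hbmax : ∀ i j, i ≠ j → c i j ≠ 0 → d i * c i j = -(max (d i) (d j)))
    :
    ∀ (i : I) (lam mu : I → KK),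
      Bform c d (Trefl c d i lam) mu = Bform c d lam (Trefl c d i mu)
    := by
  intro i lam mu
  have hs : ∀ x y : I → KK, Bform c d x y = Bform c d y x :=
    Bform_symm c d r hdpos hsymm honer hbmax
  rw [hs (Trefl c d i lam) mu]
  unfold Trefl
  rw [Bform_right, Bform_right]
  rw [hs mu lam, hs mu (alphaK i), hs lam (alphaK i)]
  ring
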